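/- Let Σ ∈ ℝ^{m×m} be symmetric positive definite with unit diagonal, let β_i ∈ ℝ^{d_i}, let Φ_i be symmetric positive semidefinite, define S with blocks S_{ij} = β_i Σ_{ij} β_jᵀ + δ_{ij} Φ_i, and assume each S_{ii} is positive definite with β_iᵀ S_{ii}⁻¹ β_i = 1. Let B̄ be any symmetric block matrix with blocks B̄_{ij} ∈ ℝ^{d_i×d_j}, set w_i = S_{ii}⁻¹ β_i, and let Σ̄ ∈ ℝ^{m×m} have entries Σ̄_{ij} = w_iᵀ B̄_{ij} w_j. Then tr(S⁻¹ B̄) = tr(Σ⁻¹ Σ̄) + Σ_{i=1}^m tr((S_{ii}⁻¹ − w_i w_iᵀ) B̄_{ii}). -/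

import Mathlib

/-!
Write `T i = β i β iᵀ + Φ i`, `w i = (T i)⁻¹ β i`, and let `U`, `W` be the block columns with
blocks `β i`, `w i`, so that `S = diag(Φ i) + U Σ Uᵀ`. The normalisation `β iᵀ w i = 1` gives
`Φ i w i = 0`, `β iᵀ D i = 0` and `Φ i D i = 1 - β i w iᵀ` for `D i = (T i)⁻¹ - w i w iᵀ`, and
these make `diag(D i) + W Σ⁻¹ Wᵀ` a right inverse of `S`. Multiplying by `B̄`, the trace of the
low-rank part is `tr(Σ⁻¹ Wᵀ B̄ W)` by cyclicity, and `Wᵀ B̄ W` is exactly `Σ̄`.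
-/

open Matrix

namespace Matrix

section BlockCol

variable {ι R : Type*} [DecidableEq ι] {κ κ' : ι → Type*}

def blockCol [Zero R] (v : ∀ i, κ i → R) : Matrix (Σ i, κ i) ι R :=
  of fun p k => if p.1 = k then v p.1 p.2 else 0

lemma blockCol_zero [Zero R] : blockCol (fun i => (0 : κ i → R)) = 0 := by
  ext p k
  simp [blockCol]

variable [Fintype ι] [Semiring R]

lemma blockDiagonal'_mul_blockCol [∀ i, Fintype (κ i)] (M : ∀ i, Matrix (κ' i) (κ i) R)
    (v : ∀ i, κ i → R) :
    blockDiagonal' M * blockCol v = blockCol fun i => M i *ᵥ v i := by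
  ext ⟨i, a⟩ k
  simp only [mul_apply, ← Finset.univ_sigma_univ, Finset.sum_sigma, blockDiagonal'_apply',
    blockCol, of_apply]
  by_cases h : i = k
  · subst h; simp [mulVec, dotProduct]
  · simp [h]

lemma blockCol_transpose_mul_blockDiagonal' [∀ i, Fintype (κ i)] (u : ∀ i, κ i → R)
    (M : ∀ i, Matrix (κ i) (κ' i) R) :
    (blockCol u)ᵀ * blockDiagonal' M = (blockCol fun i => u i ᵥ* M i)ᵀ := by
  ext k ⟨i, a⟩
  simp only [mul_apply, ← Finset.univ_sigma_univ, Finset.sum_sigma, blockDiagonal'_apply',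
    blockCol, of_apply, transpose_apply]
  simp [vecMul, dotProduct]

lemma blockCol_transpose_mul_blockCol [∀ i, Fintype (κ i)] (u v : ∀ i, κ i → R) :
    (blockCol u)ᵀ * blockCol v = diagonal fun i => u i ⬝ᵥ v i := by
  ext k l
  simp only [mul_apply, ← Finset.univ_sigma_univ, Finset.sum_sigma, blockCol, of_apply,
    transpose_apply]
  by_cases h : k = l
  · subst h; simp [dotProduct]
  · simp [h, Ne.symm h]

lemma blockCol_mul_transpose_blockCol (u : ∀ i, κ i → R) (v : ∀ i, κ' i → R) :
    blockCol u * (blockCol v)ᵀ = blockDiagonal' fun i => vecMulVec (u i) (v i) := by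
  ext ⟨i, a⟩ ⟨j, b⟩
  simp only [mul_apply, blockCol, of_apply, transpose_apply, blockDiagonal'_apply']
  by_cases h : i = j
  · subst h; simp [vecMulVec_apply]
  · simp [h]

lemma blockCol_mul_mul_transpose_blockCol_apply (u : ∀ i, κ i → R) (v : ∀ i, κ' i → R)
    (A : Matrix ι ι R) (p : Σ i, κ i) (q : Σ i, κ' i) :
    (blockCol u * A * (blockCol v)ᵀ) p q = u p.1 p.2 * A p.1 q.1 * v q.1 q.2 := by
  simp [mul_apply, blockCol]

lemma transpose_blockCol_mul_mul_blockCol_apply [∀ i, Fintype (κ i)] [∀ i, Fintype (κ' i)]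
    (u : ∀ i, κ i → R) (v : ∀ i, κ' i → R) (B : Matrix (Σ i, κ i) (Σ i, κ' i) R) (i j : ι) :
    ((blockCol u)ᵀ * B * blockCol v) i j = u i ⬝ᵥ (of fun a b => B ⟨i, a⟩ ⟨j, b⟩) *ᵥ v j := by
  simp only [mul_apply, ← Finset.univ_sigma_univ, Finset.sum_sigma, blockCol, of_apply,
    transpose_apply]
  simp [dotProduct, mulVec, Finset.mul_sum, Finset.sum_mul, mul_assoc,
    Finset.sum_comm (γ := κ i)]

lemma trace_blockDiagonal'_mul [∀ i, Fintype (κ i)] [∀ i, Fintype (κ' i)]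
    (M : ∀ i, Matrix (κ i) (κ' i) R) (B : Matrix (Σ i, κ' i) (Σ i, κ i) R) :
    trace (blockDiagonal' M * B) = ∑ i, trace (M i * blockDiag' B i) := by
  simp only [trace, diag_apply, ← Finset.univ_sigma_univ, Finset.sum_sigma, mul_apply,
    blockDiagonal'_apply', blockDiag'_apply]
  simp

end BlockCol

section RankOne

variable {n R : Type*} [Fintype n] [DecidableEq n] [CommRing R] {T : Matrix n n R} {β : n → R}

lemma vecMul_inv_of_isSymm (hT : T.IsSymm) (β : n → R) : β ᵥ* T⁻¹ = T⁻¹ *ᵥ β := by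
  conv_lhs => rw [← hT.inv.eq, vecMul_transpose]

lemma sub_vecMulVec_mulVec_inv_mulVec (hT : IsUnit T.det) (hβ : β ⬝ᵥ T⁻¹ *ᵥ β = 1) :
    (T - vecMulVec β β) *ᵥ (T⁻¹ *ᵥ β) = 0 := by
  rw [sub_mulVec, mulVec_mulVec, mul_nonsing_inv _ hT, one_mulVec, vecMulVec_mulVec, hβ,
    MulOpposite.op_one, one_smul, sub_self]

lemma vecMul_inv_sub_vecMulVec (hT : T.IsSymm) (hβ : β ⬝ᵥ T⁻¹ *ᵥ β = 1) :
    β ᵥ* (T⁻¹ - vecMulVec (T⁻¹ *ᵥ β) (T⁻¹ *ᵥ β)) = 0 := by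
  rw [vecMul_sub, vecMul_inv_of_isSymm hT, vecMul_vecMulVec, hβ, one_smul, sub_self]

lemma sub_vecMulVec_mul_inv_sub_vecMulVec (hT : IsUnit T.det) (hTs : T.IsSymm)
    (hβ : β ⬝ᵥ T⁻¹ *ᵥ β = 1) :
    (T - vecMulVec β β) * (T⁻¹ - vecMulVec (T⁻¹ *ᵥ β) (T⁻¹ *ᵥ β)) =
      1 - vecMulVec β (T⁻¹ *ᵥ β) := by
  rw [mul_sub, mul_vecMulVec, sub_vecMulVec_mulVec_inv_mulVec hT hβ, sub_mul,
    mul_nonsing_inv _ hT, vecMulVec_mul, vecMul_inv_of_isSymm hTs]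
  simp

end RankOne

section LatentFactor

variable {ι R : Type*} [Fintype ι] [DecidableEq ι] {κ : ι → Type*} [∀ i, Fintype (κ i)]

theorem inv_blockDiagonal'_add_blockCol_mul_mul_transpose [∀ i, DecidableEq (κ i)] [CommRing R]
    {Sig : Matrix ι ι R} (hSig : IsUnit Sig.det) {T : ∀ i, Matrix (κ i) (κ i) R} {β : ∀ i, κ i → R}
    (hT : ∀ i, IsUnit (T i).det) (hTs : ∀ i, (T i).IsSymm)
    (hβ : ∀ i, β i ⬝ᵥ (T i)⁻¹ *ᵥ β i = 1) :
    (blockDiagonal' (fun i => T i - vecMulVec (β i) (β i)) +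
        blockCol β * Sig * (blockCol β)ᵀ)⁻¹ =
      blockDiagonal' (fun i => (T i)⁻¹ - vecMulVec ((T i)⁻¹ *ᵥ β i) ((T i)⁻¹ *ᵥ β i)) +
        blockCol (fun i => (T i)⁻¹ *ᵥ β i) * Sig⁻¹ * (blockCol fun i => (T i)⁻¹ *ᵥ β i)ᵀ := by
  set w := fun i => (T i)⁻¹ *ᵥ β i
  set Φ := blockDiagonal' fun i => T i - vecMulVec (β i) (β i)
  set D := blockDiagonal' fun i => (T i)⁻¹ - vecMulVec (w i) (w i)
  set U := blockCol β
  set W := blockCol w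
  have hΦD : Φ * D = 1 - U * Wᵀ := by
    rw [← blockDiagonal'_mul, blockCol_mul_transpose_blockCol, ← blockDiagonal'_one,
      ← blockDiagonal'_sub]
    exact congrArg blockDiagonal' (funext fun i =>
      sub_vecMulVec_mul_inv_sub_vecMulVec (hT i) (hTs i) (hβ i))
  have hΦW : Φ * W = 0 := by
    rw [blockDiagonal'_mul_blockCol]
    simp only [w, sub_vecMulVec_mulVec_inv_mulVec (hT _) (hβ _)]
    exact blockCol_zero
  have hUD : Uᵀ * D = 0 := by
    rw [blockCol_transpose_mul_blockDiagonal']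
    simp only [w, vecMul_inv_sub_vecMulVec (hTs _) (hβ _)]
    rw [blockCol_zero, transpose_zero]
  have hUW : Uᵀ * W = 1 := by
    rw [blockCol_transpose_mul_blockCol]
    simp only [w, hβ]
    rfl
  apply inv_eq_right_inv
  calc (Φ + U * Sig * Uᵀ) * (D + W * Sig⁻¹ * Wᵀ)
      = Φ * D + Φ * W * (Sig⁻¹ * Wᵀ) + U * Sig * (Uᵀ * D)
          + U * (Sig * (Uᵀ * W) * Sig⁻¹) * Wᵀ := by
        simp only [add_mul, mul_add, Matrix.mul_assoc]
        abel
    _ = 1 - U * Wᵀ + 0 + 0 + U * Wᵀ := by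
      rw [hΦD, hΦW, hUD, hUW, Matrix.mul_one, mul_nonsing_inv _ hSig, Matrix.zero_mul,
        Matrix.mul_zero, Matrix.mul_one]
    _ = 1 := by abel

theorem trace_blockDiagonal'_add_blockCol_mul_mul_transpose_mul [CommSemiring R]
    (D : ∀ i, Matrix (κ i) (κ i) R) (w : ∀ i, κ i → R) (A : Matrix ι ι R)
    (B : Matrix (Σ i, κ i) (Σ i, κ i) R) :
    trace ((blockDiagonal' D + blockCol w * A * (blockCol w)ᵀ) * B) =
      trace (A * ((blockCol w)ᵀ * B * blockCol w)) + ∑ i, trace (D i * blockDiag' B i) := by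
  rw [add_mul, trace_add, trace_blockDiagonal'_mul, add_comm, Matrix.mul_assoc,
    Matrix.mul_assoc, trace_mul_comm]
  simp only [Matrix.mul_assoc]

end LatentFactor

end Matrix

theorem stmt7_general {m : ℕ} {d : Fin m → ℕ}
    (Sig : Matrix (Fin m) (Fin m) ℝ) (hSig : Sig.PosDef)
    (β : (i : Fin m) → Fin (d i) → ℝ)
    (Φ : (i : Fin m) → Matrix (Fin (d i)) (Fin (d i)) ℝ)
    (hSii : ∀ i, (vecMulVec (β i) (β i) + Φ i).PosDef)
    (hnorm : ∀ i, β i ⬝ᵥ (vecMulVec (β i) (β i) + Φ i)⁻¹ *ᵥ β i = 1)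
    (B : Matrix ((i : Fin m) × Fin (d i)) ((i : Fin m) × Fin (d i)) ℝ) :
    let S : Matrix ((i : Fin m) × Fin (d i)) ((i : Fin m) × Fin (d i)) ℝ :=
      Matrix.of fun p q =>
        β p.1 p.2 * Sig p.1 q.1 * β q.1 q.2 +
          (if h : p.1 = q.1 then Φ p.1 p.2 (Fin.cast (congrArg d h.symm) q.2) else 0)
    let w : (i : Fin m) → Fin (d i) → ℝ :=
      fun i => (vecMulVec (β i) (β i) + Φ i)⁻¹ *ᵥ β i
    let Bblk : (i : Fin m) → (j : Fin m) → Matrix (Fin (d i)) (Fin (d j)) ℝ :=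
      fun i j => Matrix.of fun a b => B ⟨i, a⟩ ⟨j, b⟩
    let Sbar : Matrix (Fin m) (Fin m) ℝ :=
      Matrix.of fun i j => w i ⬝ᵥ (Bblk i j) *ᵥ w j
    (S⁻¹ * B).trace
      = (Sig⁻¹ * Sbar).trace
        + ∑ i, (((vecMulVec (β i) (β i) + Φ i)⁻¹ - vecMulVec (w i) (w i)) * Bblk i i).trace := by
  intro S w Bblk Sbar
  have hT i : IsUnit (vecMulVec (β i) (β i) + Φ i).det :=
    (isUnit_iff_isUnit_det _).mp (hSii i).isUnit
  have hTs i : (vecMulVec (β i) (β i) + Φ i).IsSymm :=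
    isHermitian_iff_isSymm.mp (hSii i).isHermitian
  have hS : S = blockDiagonal' (fun i => (vecMulVec (β i) (β i) + Φ i) - vecMulVec (β i) (β i))
      + blockCol β * Sig * (blockCol β)ᵀ := by
    simp_rw [add_sub_cancel_left]
    ext ⟨i, a⟩ ⟨j, b⟩
    rw [Matrix.add_apply, blockCol_mul_mul_transpose_blockCol_apply, blockDiagonal'_apply',
      add_comm]
    by_cases h : i = j
    · subst h; rfl
    · simp [S, h]
  have hSbar : Sbar = (blockCol w)ᵀ * B * blockCol w := by
    ext i j
    exact (transpose_blockCol_mul_mul_blockCol_apply w w B i j).symm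
  rw [hS, inv_blockDiagonal'_add_blockCol_mul_mul_transpose
    ((isUnit_iff_isUnit_det _).mp hSig.isUnit) hT hTs hnorm,
    trace_blockDiagonal'_add_blockCol_mul_mul_transpose_mul, hSbar]
  rfl

/-- Trace decomposition: with `S` the block matrix with blocks
`S_{ij} = β_i Σ_{ij} β_jᵀ + δ_{ij} Φ_i`, `w_i = S_{ii}⁻¹ β_i`, and `Σ̄_{ij} = w_iᵀ B̄_{ij} w_j`,
one has `tr(S⁻¹ B̄) = tr(Σ⁻¹ Σ̄) + ∑ i tr((S_{ii}⁻¹ − w_i w_iᵀ) B̄_{ii})`. -/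
theorem stmt7 {m : ℕ} {d : Fin m → ℕ}
    (Sig : Matrix (Fin m) (Fin m) ℝ) (hSig : Sig.PosDef) (hdiag : ∀ i, Sig i i = 1)
    (β : (i : Fin m) → Fin (d i) → ℝ)
    (Φ : (i : Fin m) → Matrix (Fin (d i)) (Fin (d i)) ℝ)
    (hΦ : ∀ i, (Φ i).PosSemidef)
    (hSii : ∀ i, (vecMulVec (β i) (β i) + Φ i).PosDef)
    (hnorm : ∀ i, β i ⬝ᵥ (vecMulVec (β i) (β i) + Φ i)⁻¹ *ᵥ β i = 1)
    (B : Matrix ((i : Fin m) × Fin (d i)) ((i : Fin m) × Fin (d i)) ℝ)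
    (hB : Bᵀ = B) :
    let S : Matrix ((i : Fin m) × Fin (d i)) ((i : Fin m) × Fin (d i)) ℝ :=
      Matrix.of fun p q =>
        β p.1 p.2 * Sig p.1 q.1 * β q.1 q.2 +
          (if h : p.1 = q.1 then Φ p.1 p.2 (Fin.cast (congrArg d h.symm) q.2) else 0)
    let w : (i : Fin m) → Fin (d i) → ℝ :=
      fun i => (vecMulVec (β i) (β i) + Φ i)⁻¹ *ᵥ β i
    let Bblk : (i : Fin m) → (j : Fin m) → Matrix (Fin (d i)) (Fin (d j)) ℝ :=
      fun i j => Matrix.of fun a b => B ⟨i, a⟩ ⟨j, b⟩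
    let Sbar : Matrix (Fin m) (Fin m) ℝ :=
      Matrix.of fun i j => w i ⬝ᵥ (Bblk i j) *ᵥ w j
    (S⁻¹ * B).trace
      = (Sig⁻¹ * Sbar).trace
        + ∑ i, (((vecMulVec (β i) (β i) + Φ i)⁻¹ - vecMulVec (w i) (w i)) * Bblk i i).trace :=
  stmt7_general Sig hSig β Φ hSii hnorm B
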